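/- arXiv:2112.05010 — 2 statements merged into one kernel-verified Lean document; each statement's English description precedes it below -/
import Mathlib

section
/- For every assortment S ∈ 𝒮 and every tuple (i_1,…,i_M) ∈ L, the set S ∩ I_{i_1⋯i_M}(S) is nonempty and ρ_{i_1⋯i_M}(S) = min_{i ∈ S ∩ I_{i_1⋯i_M}(S)} r(i). -/
/-!
A ranking under which each `t m` is the top of `S_m` strictly decreases along every edge of
`G_t`, so its top of `S` cannot reach any `t m ∈ S`. Conversely, every `i ∈ S` that reaches no
`t m ∈ S` is the top of `S` for some such ranking. Hence `ρ_t(S)` is the minimum of `r` over the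
finite set `S ∩ I_t(S)`, which contains the top of `S` under any ranking witnessing `t ∈ L`.
-/

namespace RobustAssortment

/-- `i` is the most preferred product of the assortment `S` under the ranking `σ`. -/
def isTop {n : ℕ} (σ : Equiv.Perm (Fin (n + 1))) (S : Finset (Fin (n + 1)))
    (i : Fin (n + 1)) : Prop :=
  i ∈ S ∧ ∀ j ∈ S, σ i ≤ σ j

instance {n : ℕ} (σ : Equiv.Perm (Fin (n + 1))) (S : Finset (Fin (n + 1)))
    (i : Fin (n + 1)) : Decidable (isTop σ S i) := by
  unfold isTop; infer_instance
/-- Membership in the set `L` of tuples of products compatible with a common ranking. -/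
def memL {n M : ℕ} (Sm : Fin M → Finset (Fin (n + 1)))
    (t : Fin M → Fin (n + 1)) : Prop :=
  ∃ σ : Equiv.Perm (Fin (n + 1)), ∀ m : Fin M, isTop σ (Sm m) (t m)

instance {n M : ℕ} (Sm : Fin M → Finset (Fin (n + 1))) (t : Fin M → Fin (n + 1)) :
    Decidable (memL Sm t) := by
  unfold memL; infer_instance
/-- The quantity `ρ_{i_1⋯i_M}(S)`: the minimum revenue among products of `S` that can be
the top of `S` under a ranking corresponding to the tuple `t`. -/
noncomputable def rho {n M : ℕ} (Sm : Fin M → Finset (Fin (n + 1)))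
    (r : Fin (n + 1) → ℝ) (t : Fin M → Fin (n + 1)) (S : Finset (Fin (n + 1))) : ℝ :=
  sInf {x | ∃ i ∈ S, (∃ σ : Equiv.Perm (Fin (n + 1)),
    (∀ m : Fin M, isTop σ (Sm m) (t m)) ∧ isTop σ S i) ∧ x = r i}
/-- Directed edge relation of the graph `G_{i_1⋯i_M}`: an edge from `x` to `t m` for every
`m` and every `x ∈ S_m` with `x ≠ t m`. -/
def Gedge {n M : ℕ} (Sm : Fin M → Finset (Fin (n + 1)))
    (t : Fin M → Fin (n + 1)) (x y : Fin (n + 1)) : Prop :=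
  ∃ m : Fin M, y = t m ∧ x ∈ Sm m ∧ x ≠ t m

theorem exists_perm_le_iff_of_injective {α : Type*} [LinearOrder α] {k : ℕ} {f : Fin k → α}
    (hf : Function.Injective f) : ∃ σ : Equiv.Perm (Fin k), ∀ j l, σ j ≤ σ l ↔ f j ≤ f l := by
  have hsorted : StrictMono (f ∘ Tuple.sort f) :=
    (Tuple.monotone_sort f).strictMono_of_injective (hf.comp (Tuple.sort f).injective)
  refine ⟨(Tuple.sort f)⁻¹, fun j l => ?_⟩
  simpa using (hsorted.le_iff_le (a := (Tuple.sort f)⁻¹ j) (b := (Tuple.sort f)⁻¹ l)).symm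

section Graph

open Relation

variable {n M : ℕ} {Sm : Fin M → Finset (Fin (n + 1))} {t : Fin M → Fin (n + 1)}
  {σ : Equiv.Perm (Fin (n + 1))}

theorem lt_of_gedge (hσ : ∀ m, isTop σ (Sm m) (t m)) {x y : Fin (n + 1)}
    (h : Gedge Sm t x y) : σ y < σ x := by
  obtain ⟨m, rfl, hx, hne⟩ := h
  exact ((hσ m).2 x hx).lt_of_ne fun he => hne (σ.injective he).symm

theorem lt_of_transGen_gedge (hσ : ∀ m, isTop σ (Sm m) (t m)) {x y : Fin (n + 1)}
    (h : TransGen (Gedge Sm t) x y) : σ y < σ x := by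
  induction h with
  | single h => exact lt_of_gedge hσ h
  | tail _ h ih => exact (lt_of_gedge hσ h).trans ih

theorem exists_eq_of_transGen_gedge {x y : Fin (n + 1)} (h : TransGen (Gedge Sm t) x y) :
    ∃ m, y = t m := by
  obtain ⟨z, -, m, rfl, -⟩ := TransGen.tail'_iff.mp h
  exact ⟨m, rfl⟩

theorem not_transGen_of_isTop (hσ : ∀ m, isTop σ (Sm m) (t m)) {S : Finset (Fin (n + 1))}
    {i : Fin (n + 1)} (hi : isTop σ S i) (m : Fin M) (hm : t m ∈ S) :
    ¬ TransGen (Gedge Sm t) i (t m) := fun h =>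
  (lt_of_transGen_gedge hσ h).not_ge (hi.2 _ hm)

/-- Move `i` and everything reachable from it to the front, keeping the order of `σ₀` on both
parts. Edges never leave the front part, so every `t m` stays the top of `S_m`. -/
theorem exists_isTop_of_not_transGen {σ₀ : Equiv.Perm (Fin (n + 1))}
    (hσ₀ : ∀ m, isTop σ₀ (Sm m) (t m)) {S : Finset (Fin (n + 1))} {i : Fin (n + 1)}
    (hiS : i ∈ S) (hI : ∀ m, t m ∈ S → ¬ TransGen (Gedge Sm t) i (t m)) :
    ∃ σ : Equiv.Perm (Fin (n + 1)), (∀ m, isTop σ (Sm m) (t m)) ∧ isTop σ S i := by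
  classical
  set front : Fin (n + 1) → Bool := fun j => !decide (ReflTransGen (Gedge Sm t) i j)
  obtain ⟨σ, hσ⟩ := exists_perm_le_iff_of_injective (f := fun j => toLex (front j, σ₀ j))
    fun j l h => σ₀.injective (congrArg Prod.snd (toLex.injective h))
  refine ⟨σ, fun m => ⟨(hσ₀ m).1, fun x hx => ?_⟩, hiS, fun j hj => ?_⟩
  · rw [hσ, Prod.Lex.toLex_le_toLex]
    by_cases hxt : x = t m
    · exact Or.inr ⟨by rw [hxt], by rw [hxt]⟩
    have hreach : ReflTransGen (Gedge Sm t) i x → ReflTransGen (Gedge Sm t) i (t m) :=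
      fun h => h.tail ⟨m, rfl, hx, hxt⟩
    have hle := (hσ₀ m).2 x hx
    by_cases hx' : ReflTransGen (Gedge Sm t) i x <;>
      by_cases ht' : ReflTransGen (Gedge Sm t) i (t m) <;> simp_all [front]
  · rw [hσ, Prod.Lex.toLex_le_toLex]
    by_cases hj' : ReflTransGen (Gedge Sm t) i j
    · obtain rfl | hij := reflTransGen_iff_eq_or_transGen.mp hj'
      · exact Or.inr ⟨rfl, le_rfl⟩
      · obtain ⟨m, rfl⟩ := exists_eq_of_transGen_gedge hij
        exact absurd hij (hI m hj)
    · simp [front, hj', ReflTransGen.refl]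

end Graph

theorem rho_eq_sInf_image {n M : ℕ} {Sm : Fin M → Finset (Fin (n + 1))}
    {t : Fin M → Fin (n + 1)} (ht : memL Sm t) (r : Fin (n + 1) → ℝ)
    (S : Finset (Fin (n + 1))) :
    rho Sm r t S = sInf (r '' {i | i ∈ S ∧
      ∀ m : Fin M, t m ∈ S → ¬ Relation.TransGen (Gedge Sm t) i (t m)}) := by
  obtain ⟨σ₀, hσ₀⟩ := ht
  unfold rho
  congr 1
  ext x
  constructor
  · rintro ⟨i, hiS, ⟨σ, hσ, hi⟩, rfl⟩
    exact ⟨i, ⟨hiS, not_transGen_of_isTop hσ hi⟩, rfl⟩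
  · rintro ⟨i, ⟨hiS, hI⟩, rfl⟩
    exact ⟨i, hiS, exists_isTop_of_not_transGen hσ₀ hiS hI, rfl⟩

theorem statement17_general (n M : ℕ)
    (r : Fin (n + 1) → ℝ)
    (Sm : Fin M → Finset (Fin (n + 1)))
    (S : Finset (Fin (n + 1))) (hS : 0 ∈ S)
    (t : Fin M → Fin (n + 1)) (ht : memL Sm t) :
    ({i : Fin (n + 1) | i ∈ S ∧
        ∀ m : Fin M, t m ∈ S → ¬ Relation.TransGen (Gedge Sm t) i (t m)}.Nonempty) ∧
      IsLeast
        (r '' {i : Fin (n + 1) | i ∈ S ∧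
          ∀ m : Fin M, t m ∈ S → ¬ Relation.TransGen (Gedge Sm t) i (t m)})
        (rho Sm r t S) := by
  set I := {i : Fin (n + 1) | i ∈ S ∧
    ∀ m : Fin M, t m ∈ S → ¬ Relation.TransGen (Gedge Sm t) i (t m)}
  obtain ⟨σ₀, hσ₀⟩ := id ht
  have hI : I.Nonempty := by
    obtain ⟨i, hiS, hi⟩ := S.exists_min_image σ₀ ⟨0, hS⟩
    exact ⟨i, hiS, not_transGen_of_isTop hσ₀ ⟨hiS, hi⟩⟩
  have hfin : (r '' I).Finite := I.toFinite.image r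
  rw [rho_eq_sInf_image ht]
  exact ⟨hI, (hI.image r).csInf_mem hfin, fun x hx => csInf_le hfin.bddBelow hx⟩

/-- Proposition 5 of the paper: `ρ_{i_1⋯i_M}(S)` is the minimum of `r` over
`S ∩ I_{i_1⋯i_M}(S)`, where `I_{i_1⋯i_M}(S)` is the set of vertices with no directed path
to any product of `S` among `t 1, …, t M`; in particular that set is nonempty. -/
theorem statement17 (n M : ℕ) (hn : 1 ≤ n) (hM : 1 ≤ M)
    (r : Fin (n + 1) → ℝ) (hr0 : r 0 = 0) (hr : StrictMono r)
    (Sm : Fin M → Finset (Fin (n + 1))) (hSm0 : ∀ m, (0 : Fin (n + 1)) ∈ Sm m)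
    (S : Finset (Fin (n + 1))) (hS : 0 ∈ S)
    (t : Fin M → Fin (n + 1)) (ht : memL Sm t) :
    ({i : Fin (n + 1) | i ∈ S ∧
        ∀ m : Fin M, t m ∈ S → ¬ Relation.TransGen (Gedge Sm t) i (t m)}.Nonempty) ∧
      IsLeast
        (r '' {i : Fin (n + 1) | i ∈ S ∧
          ∀ m : Fin M, t m ∈ S → ¬ Relation.TransGen (Gedge Sm t) i (t m)})
        (rho Sm r t S) :=
  statement17_general n M r Sm S hS t ht

end RobustAssortment
end

section
/- Let S ∈ 𝒮 and let i ∈ N₀ with i ∉ S. If there exists i* ∈ S with r(i*) < r(i) and M_{i*} ⊆ M_i, then ρ_{i_1⋯i_M}(S) ≤ ρ_{i_1⋯i_M}(S ∪ {i}) for every tuple (i_1,…,i_M) ∈ L. -/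
/-!
A ranking under which the added product `i` is the top of `S ∪ {i}` can be modified by moving
`i*` to the position immediately after `i`. Then `i*` becomes the top of `S`, and every past
choice `i_m` survives: if `i* ∈ S_m`, then `i ∈ S_m` as well, so `i_m` already beats `i` and
hence the moved `i*`. Thus every revenue `r(i)` attained in `S ∪ {i}` is bounded below by a
revenue attained in `S` (namely `r(i*) < r(i)`, or `r(i)` itself when the top lies in `S`).
-/

namespace RobustAssortment

open Function

section Ranking

variable {n : ℕ}

theorem exists_perm_le_iff_of_injective_s18 {α : Type*} [LinearOrder α] {κ : Fin n → α}
    (hκ : Injective κ) : ∃ σ : Equiv.Perm (Fin n), ∀ x y, σ x ≤ σ y ↔ κ x ≤ κ y := by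
  have hmono : StrictMono (κ ∘ Tuple.sort κ) :=
    (Tuple.monotone_sort κ).strictMono_of_injective (hκ.comp (Tuple.sort κ).injective)
  refine ⟨(Tuple.sort κ).symm, fun x y => ?_⟩
  simpa using (hmono.le_iff_le (a := (Tuple.sort κ).symm x) (b := (Tuple.sort κ).symm y)).symm

/-- Move `b` to the position immediately after `a`, keeping the relative order of the rest. -/
theorem exists_perm_move_after (σ : Equiv.Perm (Fin n)) (a b : Fin n) :
    ∃ σ' : Equiv.Perm (Fin n),
      (∀ x y, x ≠ b → y ≠ b → (σ' x ≤ σ' y ↔ σ x ≤ σ y)) ∧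
      ∀ x, x ≠ b → (σ' x ≤ σ' b ↔ σ x ≤ σ a) := by
  let κ : Fin n → Fin n ×ₗ Bool := fun x =>
    if x = b then toLex (σ a, true) else toLex (σ x, false)
  have hκ : Injective κ := by
    intro x y h
    by_cases hx : x = b <;> by_cases hy : y = b <;>
      simp_all [κ, σ.injective.eq_iff]
  obtain ⟨σ', hσ'⟩ := exists_perm_le_iff_of_injective_s18 hκ
  refine ⟨σ', fun x y hx hy => ?_, fun x hx => ?_⟩
  · simp only [hσ', κ, if_neg hx, if_neg hy, Prod.Lex.toLex_le_toLex]
    simp [le_iff_lt_or_eq]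
  · simp only [hσ', κ, if_neg hx, if_pos rfl, Prod.Lex.toLex_le_toLex]
    simp [le_iff_lt_or_eq]

theorem isTop_of_isTop_insert {σ : Equiv.Perm (Fin (n + 1))} {S : Finset (Fin (n + 1))}
    {i j : Fin (n + 1)} (hj : j ∈ S) (h : isTop σ (insert i S) j) : isTop σ S j :=
  ⟨hj, fun k hk => h.2 k (Finset.mem_insert_of_mem hk)⟩

end Ranking

variable {n M : ℕ} {Sm : Fin M → Finset (Fin (n + 1))} {t : Fin M → Fin (n + 1)}

theorem exists_isTop_of_isTop_insert {σ : Equiv.Perm (Fin (n + 1))} {S : Finset (Fin (n + 1))}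
    {i istar : Fin (n + 1)} (hiS : i ∉ S) (histar : istar ∈ S)
    (hMi : ∀ m, istar ∈ Sm m → i ∈ Sm m)
    (hσ : ∀ m, isTop σ (Sm m) (t m)) (hi : isTop σ (insert i S) i) :
    ∃ σ' : Equiv.Perm (Fin (n + 1)), (∀ m, isTop σ' (Sm m) (t m)) ∧ isTop σ' S istar := by
  have hne : ∀ {k}, k ∈ S → k ≠ i := fun {k} hk hki => hiS (hki ▸ hk)
  have hlt : ∀ {k}, k ∈ S → σ i < σ k := fun {k} hk =>
    (hi.2 k (Finset.mem_insert_of_mem hk)).lt_of_ne (σ.injective.ne (hne hk).symm)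
  obtain ⟨σ', hrest, hafter⟩ := exists_perm_move_after σ i istar
  refine ⟨σ', fun m => ⟨(hσ m).1, fun k hk => ?_⟩, histar, fun k hk => ?_⟩
  · by_cases hstar : istar ∈ Sm m
    · have hti : σ (t m) ≤ σ i := (hσ m).2 i (hMi m hstar)
      have htm : t m ≠ istar := fun h => (hlt histar).not_ge (h ▸ hti)
      by_cases hk' : k = istar
      · exact hk' ▸ (hafter _ htm).2 hti
      · exact (hrest _ _ htm hk').2 ((hσ m).2 k hk)
    · exact (hrest _ _ (ne_of_mem_of_not_mem (hσ m).1 hstar) (ne_of_mem_of_not_mem hk hstar)).2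
        ((hσ m).2 k hk)
  · by_cases hk' : k = istar
    · exact hk' ▸ le_rfl
    · exact (not_le.mp (mt (hafter k hk').1 (hlt hk).not_ge)).le

variable {r : Fin (n + 1) → ℝ}

theorem rho_le {S : Finset (Fin (n + 1))} {j : Fin (n + 1)} {σ : Equiv.Perm (Fin (n + 1))}
    (hσ : ∀ m, isTop σ (Sm m) (t m)) (hj : isTop σ S j) : rho Sm r t S ≤ r j := by
  refine csInf_le ((Set.finite_range r).bddBelow.mono ?_) ⟨j, hj.1, ⟨σ, hσ, hj⟩, rfl⟩
  rintro _ ⟨k, -, -, rfl⟩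
  exact Set.mem_range_self k

theorem le_rho {T : Finset (Fin (n + 1))} (ht : memL Sm t) (hT : T.Nonempty) {c : ℝ}
    (h : ∀ j σ, (∀ m, isTop σ (Sm m) (t m)) → isTop σ T j → c ≤ r j) :
    c ≤ rho Sm r t T := by
  obtain ⟨σ, hσ⟩ := ht
  obtain ⟨j, hjT, hjmin⟩ := T.exists_min_image σ hT
  refine le_csInf ⟨r j, j, hjT, ⟨σ, hσ, hjT, hjmin⟩, rfl⟩ ?_
  rintro _ ⟨k, -, ⟨τ, hτ, hk⟩, rfl⟩
  exact h k τ hτ hk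

theorem statement18_general (n M : ℕ)
    (r : Fin (n + 1) → ℝ)
    (Sm : Fin M → Finset (Fin (n + 1)))
    (S : Finset (Fin (n + 1)))
    (i : Fin (n + 1)) (hiS : i ∉ S)
    (istar : Fin (n + 1)) (histar : istar ∈ S) (hri : r istar < r i)
    (hMi : ∀ m : Fin M, istar ∈ Sm m → i ∈ Sm m) :
    ∀ t : Fin M → Fin (n + 1), memL Sm t →
      rho Sm r t S ≤ rho Sm r t (insert i S) := by
  intro t ht
  refine le_rho ht (Finset.insert_nonempty i S) fun j σ hσ hj => ?_
  rcases Finset.mem_insert.mp hj.1 with rfl | hjS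
  · obtain ⟨σ', hσ', hstar⟩ := exists_isTop_of_isTop_insert hiS histar hMi hσ hj
    exact (rho_le hσ' hstar).trans hri.le
  · exact rho_le hσ (isTop_of_isTop_insert hjS hj)

/-- Claim 2 of the paper: adding a product `i ∉ S` dominated in the sense that some
`i* ∈ S` has smaller revenue and was offered in every past assortment in which `i` was
offered... (precisely: `r i* < r i` and `M_{i*} ⊆ M_i`) can only increase `ρ`. -/
theorem statement18 (n M : ℕ) (hn : 1 ≤ n) (hM : 1 ≤ M)
    (r : Fin (n + 1) → ℝ) (hr0 : r 0 = 0) (hr : StrictMono r)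
    (Sm : Fin M → Finset (Fin (n + 1))) (hSm0 : ∀ m, (0 : Fin (n + 1)) ∈ Sm m)
    (S : Finset (Fin (n + 1))) (hS : 0 ∈ S)
    (i : Fin (n + 1)) (hiS : i ∉ S)
    (istar : Fin (n + 1)) (histar : istar ∈ S) (hri : r istar < r i)
    (hMi : ∀ m : Fin M, istar ∈ Sm m → i ∈ Sm m) :
    ∀ t : Fin M → Fin (n + 1), memL Sm t →
      rho Sm r t S ≤ rho Sm r t (insert i S) :=
  statement18_general n M r Sm S i hiS istar histar hri hMi

end RobustAssortment
end
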